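/- arXiv:1412.0738 — 2 statements merged into one kernel-verified Lean document; each statement's English description precedes it below -/
import Mathlib

section
/- The three-dimensional Hénon map H(x, y, z) = (y, z, M1 + B·x + M2·y − z²) has a fixed point at which the Jacobian matrix of H has characteristic polynomial (λ + 1)²·(λ − 1) (i.e., the triplet of multipliers is (−1, −1, +1)) if and only if (M1, M2, B) = (−1/4, 1, 1); in that case the fixed point is (1/2, 1/2, 1/2). -/
/-!
The Jacobian of the Hénon map is a companion matrix, so its characteristic polynomial at a point
with last coordinate `z` is `X³ + 2z X² - M2 X - B`; comparing coefficients with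
`(X + 1)²(X - 1) = X³ + X² - X - 1` forces `B = 1`, `M2 = 1`, `z = 1/2`. Fixed points lie on the
diagonal, so the fixed point is `(1/2, 1/2, 1/2)`, and its last equation then pins `M1 = -1/4`.
-/

open Polynomial

theorem Matrix.charpoly_fin_three_companion {R : Type*} [CommRing R] (a b c : R) :
    (!![0, 1, 0; 0, 0, 1; a, b, c] : Matrix (Fin 3) (Fin 3) R).charpoly =
      X ^ 3 - C c * X ^ 2 - C b * X - C a := by
  rw [Matrix.charpoly, Matrix.det_fin_three]
  simp only [Fin.isValue, charmatrix_apply_eq, of_apply, cons_val', cons_val_zero,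
    cons_val_fin_one, map_zero, sub_zero, cons_val_one, cons_val, ne_eq, Fin.reduceEq,
    not_false_eq_true, charmatrix_apply_ne, map_one, mul_neg, mul_one, neg_mul, X_mul_C, neg_neg,
    zero_ne_one, one_ne_zero, neg_zero, mul_zero, zero_mul, one_mul, add_zero]
  ring

theorem Matrix.charpoly_fin_three_companion_eq_iff {R : Type*} [CommRing R] (a b c : R) :
    (!![0, 1, 0; 0, 0, 1; a, b, c] : Matrix (Fin 3) (Fin 3) R).charpoly = (X + 1) ^ 2 * (X - 1) ↔
      a = 1 ∧ b = 1 ∧ c = -1 := by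
  have expand : ((X + 1) ^ 2 * (X - 1) : R[X]) = X ^ 3 - C (-1) * X ^ 2 - C 1 * X - C 1 := by
    simp only [map_neg, map_one]; ring
  rw [Matrix.charpoly_fin_three_companion, expand]
  constructor
  · intro h
    exact ⟨by simpa [coeff_X, coeff_C, coeff_one] using congrArg (coeff · 0) h,
      by simpa [coeff_X, coeff_C, coeff_one] using congrArg (coeff · 1) h,
      by simpa [coeff_X, coeff_C, coeff_one, neg_eq_iff_eq_neg] using congrArg (coeff · 2) h⟩
  · rintro ⟨rfl, rfl, rfl⟩
    rfl

theorem henon_fixedPoint_multipliers_iff (M1 M2 B : ℝ) (H : ℝ × ℝ × ℝ → ℝ × ℝ × ℝ)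
    (hH : ∀ x y z : ℝ, H (x, y, z) = (y, z, M1 + B * x + M2 * y - z ^ 2)) (p : ℝ × ℝ × ℝ) :
    (H p = p ∧
        Matrix.charpoly (!![0, 1, 0; 0, 0, 1; B, M2, -2 * p.2.2] : Matrix (Fin 3) (Fin 3) ℝ) =
          (X + 1) ^ 2 * (X - 1)) ↔
      (M1 = -(1/4) ∧ M2 = 1 ∧ B = 1) ∧ p = (1/2, 1/2, 1/2) := by
  obtain ⟨x, y, z⟩ := p
  simp only [hH, Prod.mk.injEq, Matrix.charpoly_fin_three_companion_eq_iff]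
  constructor
  · rintro ⟨⟨rfl, rfl, hM1⟩, rfl, rfl, hz⟩
    obtain rfl : z = 1 / 2 := by linarith
    exact ⟨⟨by linarith, rfl, rfl⟩, rfl, rfl, rfl⟩
  · rintro ⟨⟨rfl, rfl, rfl⟩, rfl, rfl, rfl⟩
    norm_num

/-- The 3D Hénon map has a fixed point with multipliers `(−1,−1,+1)` (i.e. characteristic
polynomial `(λ+1)²(λ−1)` of the Jacobian there) iff `(M1, M2, B) = (−1/4, 1, 1)`;
in that case the fixed point is `(1/2, 1/2, 1/2)`. -/
theorem henon_multipliers_minus_one_minus_one_one (M1 M2 B : ℝ)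
    (H : ℝ × ℝ × ℝ → ℝ × ℝ × ℝ)
    (hH : ∀ x y z : ℝ, H (x, y, z) = (y, z, M1 + B * x + M2 * y - z ^ 2)) :
    ((∃ p : ℝ × ℝ × ℝ, H p = p ∧
        Matrix.charpoly (!![0, 1, 0; 0, 0, 1; B, M2, -2 * p.2.2] : Matrix (Fin 3) (Fin 3) ℝ) =
          (X + 1) ^ 2 * (X - 1)) ↔ (M1 = -(1/4) ∧ M2 = 1 ∧ B = 1)) ∧
    ((M1 = -(1/4) ∧ M2 = 1 ∧ B = 1) →
      ∀ p : ℝ × ℝ × ℝ, H p = p ∧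
        Matrix.charpoly (!![0, 1, 0; 0, 0, 1; B, M2, -2 * p.2.2] : Matrix (Fin 3) (Fin 3) ℝ) =
          (X + 1) ^ 2 * (X - 1) → p = (1/2, 1/2, 1/2)) := by
  simp only [henon_fixedPoint_multipliers_iff M1 M2 B H hH]
  exact ⟨⟨fun ⟨_, hparams, _⟩ ↦ hparams, fun hparams ↦ ⟨_, hparams, rfl⟩⟩,
    fun _ _ h ↦ h.2⟩
end

section
/- Let B ≠ 0 and let H(x, y, z) = (y, z, M1 + B·x + M2·y − z²) be the three-dimensional Hénon map. Define Ĥ(x, y, z) = (y, z, M̂1 + M̂2·z + B̂·x − y²) with B̂ = 1/B, M̂1 = M1/B², M̂2 = −M2/B. Let σ(x, y, z) = (z, y, x) and h(v) = (−1/B)·v for v ∈ ℝ³. Then Ĥ = h ∘ σ ∘ H⁻¹ ∘ σ ∘ h⁻¹, i.e., Ĥ is conjugate, via the affine bijection σ ∘ h⁻¹ = h⁻¹ ∘ σ, to the inverse of H. -/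
/-!
`H` is invertible because its last coordinate is affine in `x` with slope `B ≠ 0`: solving for `x`
gives `H⁻¹(a, b, c) = ((c - M1 - M2 a + b²) / B, a, b)`. Conjugating `H⁻¹` by the coordinate
reversal `σ` turns the shift to the right into a shift to the left, and the scaling `h` is chosen
so that the quadratic term `B² y²`, after division by `B²`, again has coefficient `-1`.
-/

namespace Henon

variable {K : Type*} [Field K]

def henon (M1 M2 B : K) (p : K × K × K) : K × K × K :=
  (p.2.1, p.2.2, M1 + B * p.1 + M2 * p.2.1 - p.2.2 ^ 2)

def henonInv (M1 M2 B : K) (p : K × K × K) : K × K × K :=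
  ((p.2.2 - M1 - M2 * p.1 + p.2.1 ^ 2) / B, p.1, p.2.1)

/-- The map (HM2) of the paper. -/
def henonHat (M1 M2 B : K) (p : K × K × K) : K × K × K :=
  (p.2.1, p.2.2, M1 + M2 * p.2.2 + B * p.1 - p.2.1 ^ 2)

def reverse {α : Type*} (p : α × α × α) : α × α × α :=
  (p.2.2, p.2.1, p.1)

theorem reverse_smul {M α : Type*} [SMul M α] (c : M) (p : α × α × α) :
    reverse (c • p) = c • reverse p :=
  rfl

variable {M1 M2 B : K}

theorem henonInv_henon (hB : B ≠ 0) :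
    Function.LeftInverse (henonInv M1 M2 B) (henon M1 M2 B) := by
  rintro ⟨x, y, z⟩
  simp only [henon, henonInv, Prod.mk.injEq, and_true]
  field_simp
  ring

theorem henon_henonInv (hB : B ≠ 0) :
    Function.RightInverse (henonInv M1 M2 B) (henon M1 M2 B) := by
  rintro ⟨a, b, c⟩
  simp only [henon, henonInv, Prod.mk.injEq, true_and]
  field_simp
  ring

theorem invFun_henon (hB : B ≠ 0) :
    Function.invFun (henon M1 M2 B) = henonInv M1 M2 B :=
  Function.invFun_eq_of_injective_of_rightInverse (henonInv_henon hB).injective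
    (henon_henonInv hB)

theorem henonHat_eq_conj_henonInv (hB : B ≠ 0) (p : K × K × K) :
    henonHat (M1 / B ^ 2) (-(M2 / B)) (1 / B) p
      = (-(1 / B)) • reverse (henonInv M1 M2 B (reverse ((-B) • p))) := by
  obtain ⟨x, y, z⟩ := p
  simp only [henonHat, henonInv, reverse, Prod.smul_mk, smul_eq_mul, Prod.mk.injEq]
  refine ⟨by field_simp, by field_simp, by field_simp; ring⟩

end Henon

open Henon in
/-- The map (HM2) with `B̂ = 1/B`, `M̂1 = M1/B²`, `M̂2 = −M2/B` is conjugate, via the affine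
bijection `σ ∘ h⁻¹ = h⁻¹ ∘ σ` (with `σ(x,y,z) = (z,y,x)` and `h(v) = (−1/B)·v`), to the
inverse of the 3D Hénon map (HM1). -/
theorem HM2_conjugate_inverse_HM1 (M1 M2 B : ℝ) (hB : B ≠ 0)
    (H Hhat σ h hinv : ℝ × ℝ × ℝ → ℝ × ℝ × ℝ)
    (hH : ∀ x y z : ℝ, H (x, y, z) = (y, z, M1 + B * x + M2 * y - z ^ 2))
    (hHhat : ∀ x y z : ℝ,
      Hhat (x, y, z) = (y, z, M1 / B ^ 2 + (-(M2 / B)) * z + (1 / B) * x - y ^ 2))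
    (hσ : ∀ x y z : ℝ, σ (x, y, z) = (z, y, x))
    (hh : ∀ v : ℝ × ℝ × ℝ, h v = (-(1 / B)) • v)
    (hhinv : ∀ v : ℝ × ℝ × ℝ, hinv v = (-B) • v) :
    (σ ∘ hinv = hinv ∘ σ) ∧
      Hhat = h ∘ σ ∘ Function.invFun H ∘ σ ∘ hinv := by
  have hH' : H = henon M1 M2 B := funext fun ⟨x, y, z⟩ => hH x y z
  have hHhat' : Hhat = henonHat (M1 / B ^ 2) (-(M2 / B)) (1 / B) :=
    funext fun ⟨x, y, z⟩ => hHhat x y z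
  have hσ' : σ = reverse := funext fun ⟨x, y, z⟩ => hσ x y z
  have hh' : h = ((-(1 / B)) • ·) := funext hh
  have hhinv' : hinv = ((-B) • ·) := funext hhinv
  subst hH' hHhat' hσ' hh' hhinv'
  refine ⟨funext fun p => reverse_smul (-B) p, ?_⟩
  rw [invFun_henon hB]
  exact funext (henonHat_eq_conj_henonInv hB)
end
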